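/- arXiv:1911.11173 — 3 statements merged into one kernel-verified Lean document; each statement's English description precedes it below -/
import Mathlib

section
/- Let k be a field of characteristic zero, L a Lie algebra over k, H a Lie subalgebra of L, and pr : L → H an H-equivariant projection with curvature R. Let m ≥ 1 and let P : H^m → k be an H-invariant symmetric m-form, with associated Chern–Weil cochain cw_P : L^{2m} → k. Then cw_P is a relative cochain for the pair (L, H): (i) cw_P(x₁, …, x_{2m}) = 0 whenever some argument x_i lies in H, and (ii) for every a ∈ H and all x₁, …, x_{2m} ∈ L, ∑_{i=1}^{2m} cw_P(x₁, …, ⁅a, x_i⁆, …, x_{2m}) = 0. -/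
open Finset

/-- Chevalley–Eilenberg insertion: from the ℕ-indexed family `x 0, x 1, …`, form the family
`⁅x i, x j⁆, x 0, …, x̂ i, …, x̂ j, …` (omitting the `i`-th and `j`-th entries, for `i < j`). -/
def ceTermN {L : Type*} [LieRing L] (x : ℕ → L) (i j : ℕ) : ℕ → L := fun t =>
  if t = 0 then ⁅x i, x j⁆
  else if t - 1 < i then x (t - 1)
  else if t < j then x t
  else x (t + 1)

/-- The curvature `R(x, y) = ⁅pr x, pr y⁆ − pr ⁅x, y⁆` of an `H`-equivariant
projection `pr : L → H`. -/
def curvature {k L : Type*} [CommRing k] [LieRing L] [LieAlgebra k L]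
    {H : LieSubalgebra k L} (pr : L →ₗ[k] H) (x y : L) : H :=
  ⁅pr x, pr y⁆ - pr ⁅x, y⁆

/-- The Chern–Weil cochain `cw_P` associated to an invariant polynomial `P` and a
projection `pr`, viewed as a function of an ℕ-indexed family of elements of `L`
(only the first `2m` entries are used):
`cw_P(x₁, …, x_{2m}) = ∑_{σ} sgn(σ) P(R(x_{σ(1)}, x_{σ(2)}), …, R(x_{σ(2m−1)}, x_{σ(2m)}))`. -/
noncomputable def chernWeilN {k L : Type*} [CommRing k] [LieRing L] [LieAlgebra k L]
    {H : LieSubalgebra k L} {m : ℕ}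
    (P : MultilinearMap k (fun _ : Fin m => H) k)
    (pr : L →ₗ[k] H) (y : ℕ → L) : k :=
  ∑ σ : Equiv.Perm (Fin (2*m)),
    ((Equiv.Perm.sign σ : ℤ)) •
      P (fun s : Fin m =>
        curvature pr
          (y ((σ (⟨2*(s:ℕ), by have := s.isLt; omega⟩ : Fin (2*m)) : ℕ)))
          (y ((σ (⟨2*(s:ℕ)+1, by have := s.isLt; omega⟩ : Fin (2*m)) : ℕ))))


section helpers
variable {k L : Type*} [Field k] [LieRing L] [LieAlgebra k L]
  {H : LieSubalgebra k L} (pr : L →ₗ[k] H)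
  (hpr : ∀ a : H, pr (a : L) = a)
  (heq : ∀ (a : H) (x : L), pr ⁅(a : L), x⁆ = ⁅a, pr x⁆)

include hpr heq in
lemma curv_left (a : H) (y : L) : curvature pr (a : L) y = 0 := by
  simp [curvature, hpr, heq]

include hpr heq in
lemma curv_right (a : H) (y : L) : curvature pr y (a : L) = 0 := by
  have h : ⁅y, (a:L)⁆ = -⁅(a:L), y⁆ := by rw [← lie_skew]
  simp only [curvature, hpr, h, map_neg, heq]
  rw [← lie_skew]
  simp

include heq in
lemma curv_brk (a : H) (u v : L) :
    curvature pr ⁅(a:L), u⁆ v + curvature pr u ⁅(a:L), v⁆ = ⁅a, curvature pr u v⁆ := by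
  simp only [curvature, heq]
  have h1 : ⁅⁅a, pr u⁆, pr v⁆ + ⁅pr u, ⁅a, pr v⁆⁆ = ⁅a, ⁅pr u, pr v⁆⁆ :=
    (leibniz_lie a (pr u) (pr v)).symm
  have h2 : pr ⁅⁅(a:L), u⁆, v⁆ + pr ⁅u, ⁅(a:L), v⁆⁆ = ⁅a, pr ⁅u, v⁆⁆ := by
    rw [← map_add, ← leibniz_lie, heq]
  rw [lie_sub, ← h1, ← h2]
  abel

end helpers

lemma sum_pairs {M : Type*} [AddCommMonoid M] (n : ℕ) (g : ℕ → M) :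
    ∑ i ∈ Finset.range (2*n), g i = ∑ s ∈ Finset.range n, (g (2*s) + g (2*s+1)) := by
  induction n with
  | zero => simp
  | succ n ih =>
    have h : 2*(n+1) = (2*n+1)+1 := by ring
    rw [h, Finset.sum_range_succ, Finset.sum_range_succ, ih, Finset.sum_range_succ]
    abel

lemma sum_fin_pairs {M : Type*} [AddCommMonoid M] (n : ℕ) (h : Fin (2*n) → M) :
    ∑ j, h j = ∑ s : Fin n, (h ⟨2*(s:ℕ), by have := s.isLt; omega⟩
      + h ⟨2*(s:ℕ)+1, by have := s.isLt; omega⟩) := by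
  set g : ℕ → M := fun i => if hi : i < 2*n then h ⟨i, hi⟩ else 0 with hg
  have e1 : ∑ j, h j = ∑ i ∈ Finset.range (2*n), g i := by
    rw [← Fin.sum_univ_eq_sum_range]
    refine Finset.sum_congr rfl fun j _ => ?_
    simp [hg, j.isLt]
  rw [e1, sum_pairs, ← Fin.sum_univ_eq_sum_range]
  refine Finset.sum_congr rfl fun s _ => ?_
  have h1 : 2*(s:ℕ) < 2*n := by have := s.isLt; omega
  have h2 : 2*(s:ℕ)+1 < 2*n := by have := s.isLt; omega
  simp [hg, h1, h2]

set_option maxHeartbeats 2000000 in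
/-- The Chern–Weil cochain is a relative cochain for the pair `(L, H)`:
(i) it vanishes whenever some argument lies in `H`, and
(ii) it is `H`-invariant: `∑_{i=1}^{2m} cw_P(x₁, …, ⁅a, x_i⁆, …, x_{2m}) = 0`. -/
theorem chernWeil_cochain_relative
    {k L : Type*} [Field k] [CharZero k] [LieRing L] [LieAlgebra k L]
    (H : LieSubalgebra k L) (pr : L →ₗ[k] H)
    (hpr : ∀ a : H, pr (a : L) = a)
    (heq : ∀ (a : H) (x : L), pr ⁅(a : L), x⁆ = ⁅a, pr x⁆)
    {m : ℕ} (hm : 1 ≤ m)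
    (P : MultilinearMap k (fun _ : Fin m => H) k)
    (hPsymm : ∀ (v : Fin m → H) (σ : Equiv.Perm (Fin m)), P (v ∘ σ) = P v)
    (hPinv : ∀ (a : H) (v : Fin m → H),
      ∑ i : Fin m, P (Function.update v i ⁅a, v i⁆) = 0) :
    (∀ (x : ℕ → L) (i : ℕ), i < 2*m → x i ∈ H → chernWeilN P pr x = 0)
    ∧ (∀ (a : H) (x : ℕ → L),
        ∑ i ∈ Finset.range (2*m),
          chernWeilN P pr (Function.update x i ⁅(a : L), x i⁆) = 0) := by
  constructor
  · -- Part (i)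
    intro x i hi hx
    unfold chernWeilN
    refine Finset.sum_eq_zero fun σ _ => ?_
    set a : H := ⟨x i, hx⟩ with ha
    have hxa : x i = (a : L) := rfl
    set j : Fin (2*m) := σ.symm ⟨i, hi⟩ with hj
    rcases Nat.even_or_odd (j : ℕ) with ⟨c, hc⟩ | ⟨c, hc⟩
    · -- even: j = c + c
      have hcm : c < m := by have := j.isLt; omega
      set s : Fin m := ⟨c, hcm⟩ with hs
      have hfin : (⟨2*(s:ℕ), by have := s.isLt; omega⟩ : Fin (2*m)) = j := by
        apply Fin.ext; simp [hs]; omega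
      have hσ : σ (⟨2*(s:ℕ), by have := s.isLt; omega⟩ : Fin (2*m)) = ⟨i, hi⟩ := by
        rw [hfin, hj, Equiv.apply_symm_apply]
      have hz : curvature pr
          (x ((σ (⟨2*(s:ℕ), by have := s.isLt; omega⟩ : Fin (2*m)) : ℕ)))
          (x ((σ (⟨2*(s:ℕ)+1, by have := s.isLt; omega⟩ : Fin (2*m)) : ℕ))) = 0 := by
        rw [hσ]
        exact curv_left pr hpr heq a _
      rw [P.map_coord_zero s hz, smul_zero]
    · -- odd: j = 2c+1
      have hcm : c < m := by have := j.isLt; omega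
      set s : Fin m := ⟨c, hcm⟩ with hs
      have hfin : (⟨2*(s:ℕ)+1, by have := s.isLt; omega⟩ : Fin (2*m)) = j := by
        apply Fin.ext; simp [hs]; omega
      have hσ : σ (⟨2*(s:ℕ)+1, by have := s.isLt; omega⟩ : Fin (2*m)) = ⟨i, hi⟩ := by
        rw [hfin, hj, Equiv.apply_symm_apply]
      have hz : curvature pr
          (x ((σ (⟨2*(s:ℕ), by have := s.isLt; omega⟩ : Fin (2*m)) : ℕ)))
          (x ((σ (⟨2*(s:ℕ)+1, by have := s.isLt; omega⟩ : Fin (2*m)) : ℕ))) = 0 := by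
        rw [hσ]
        exact curv_right pr hpr heq a _
      rw [P.map_coord_zero s hz, smul_zero]
  · -- Part (ii)
    intro a x
    unfold chernWeilN
    rw [Finset.sum_comm]
    refine Finset.sum_eq_zero fun σ _ => ?_
    rw [← Finset.smul_sum]
    set g : ℕ → k := fun i =>
      P (fun s : Fin m =>
        curvature pr
          (Function.update x i ⁅(a:L), x i⁆
            ((σ (⟨2*(s:ℕ), by have := s.isLt; omega⟩ : Fin (2*m)) : ℕ)))
          (Function.update x i ⁅(a:L), x i⁆
            ((σ (⟨2*(s:ℕ)+1, by have := s.isLt; omega⟩ : Fin (2*m)) : ℕ)))) with hg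
    have hval : ∀ (j j' : Fin (2*m)), j ≠ j' → ((σ j : ℕ) ≠ (σ j' : ℕ)) := by
      intro j j' hne h
      exact hne (σ.injective (Fin.val_injective h))
    set v : Fin m → H := fun s =>
      curvature pr
        (x ((σ (⟨2*(s:ℕ), by have := s.isLt; omega⟩ : Fin (2*m)) : ℕ)))
        (x ((σ (⟨2*(s:ℕ)+1, by have := s.isLt; omega⟩ : Fin (2*m)) : ℕ))) with hv
    have key : ∑ i ∈ Finset.range (2*m), g i = 0 := by
      have e1 : ∑ i ∈ Finset.range (2*m), g i = ∑ j : Fin (2*m), g ((σ j : ℕ)) := by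
        rw [← Fin.sum_univ_eq_sum_range g (2*m)]
        exact (Equiv.sum_comp σ (fun j => g (j : ℕ))).symm
      rw [e1, sum_fin_pairs m (fun j => g ((σ j : ℕ)))]
      have e2 : ∀ s : Fin m,
          g ((σ (⟨2*(s:ℕ), by have := s.isLt; omega⟩ : Fin (2*m)) : ℕ))
          + g ((σ (⟨2*(s:ℕ)+1, by have := s.isLt; omega⟩ : Fin (2*m)) : ℕ))
          = P (Function.update v s ⁅a, v s⁆) := by
        intro s
        set j0 : Fin (2*m) := ⟨2*(s:ℕ), by have := s.isLt; omega⟩ with hj0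
        set j1 : Fin (2*m) := ⟨2*(s:ℕ)+1, by have := s.isLt; omega⟩ with hj1
        have hj01 : j0 ≠ j1 := by
          intro h; have := congrArg Fin.val h; simp [hj0, hj1] at this
        have hE0 : (fun s' : Fin m =>
            curvature pr
              (Function.update x ((σ j0 : ℕ)) ⁅(a:L), x ((σ j0 : ℕ))⁆
                ((σ (⟨2*(s':ℕ), by have := s'.isLt; omega⟩ : Fin (2*m)) : ℕ)))
              (Function.update x ((σ j0 : ℕ)) ⁅(a:L), x ((σ j0 : ℕ))⁆
                ((σ (⟨2*(s':ℕ)+1, by have := s'.isLt; omega⟩ : Fin (2*m)) : ℕ))))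
            = Function.update v s
                (curvature pr ⁅(a:L), x ((σ j0 : ℕ))⁆ (x ((σ j1 : ℕ)))) := by
          funext s'
          show curvature pr
              (Function.update x ((σ j0 : ℕ)) ⁅(a:L), x ((σ j0 : ℕ))⁆
                ((σ (⟨2*(s':ℕ), by have := s'.isLt; omega⟩ : Fin (2*m)) : ℕ)))
              (Function.update x ((σ j0 : ℕ)) ⁅(a:L), x ((σ j0 : ℕ))⁆
                ((σ (⟨2*(s':ℕ)+1, by have := s'.isLt; omega⟩ : Fin (2*m)) : ℕ)))
            = Function.update v s
                (curvature pr ⁅(a:L), x ((σ j0 : ℕ))⁆ (x ((σ j1 : ℕ)))) s'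
          by_cases hss : s' = s
          · subst hss
            have r0 : (⟨2*(s':ℕ), by have := s'.isLt; omega⟩ : Fin (2*m)) = j0 := rfl
            have r1 : (⟨2*(s':ℕ)+1, by have := s'.isLt; omega⟩ : Fin (2*m)) = j1 := rfl
            rw [r0, r1, Function.update_of_ne (hval _ _ hj01.symm)]
            simp only [Function.update_self]
          · have d0 : (⟨2*(s':ℕ), by have := s'.isLt; omega⟩ : Fin (2*m)) ≠ j0 := by
              intro h; have h2 := congrArg Fin.val h
              have hne : ((s':ℕ)) ≠ ((s:ℕ)) := fun h3 => hss (Fin.ext h3)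
              simp [hj0] at h2; omega
            have d1 : (⟨2*(s':ℕ)+1, by have := s'.isLt; omega⟩ : Fin (2*m)) ≠ j0 := by
              intro h; have h2 := congrArg Fin.val h; simp [hj0] at h2; omega
            rw [Function.update_of_ne hss, Function.update_of_ne (hval _ _ d0),
              Function.update_of_ne (hval _ _ d1)]
        have hE1 : (fun s' : Fin m =>
            curvature pr
              (Function.update x ((σ j1 : ℕ)) ⁅(a:L), x ((σ j1 : ℕ))⁆
                ((σ (⟨2*(s':ℕ), by have := s'.isLt; omega⟩ : Fin (2*m)) : ℕ)))
              (Function.update x ((σ j1 : ℕ)) ⁅(a:L), x ((σ j1 : ℕ))⁆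
                ((σ (⟨2*(s':ℕ)+1, by have := s'.isLt; omega⟩ : Fin (2*m)) : ℕ))))
            = Function.update v s
                (curvature pr (x ((σ j0 : ℕ))) ⁅(a:L), x ((σ j1 : ℕ))⁆) := by
          funext s'
          show curvature pr
              (Function.update x ((σ j1 : ℕ)) ⁅(a:L), x ((σ j1 : ℕ))⁆
                ((σ (⟨2*(s':ℕ), by have := s'.isLt; omega⟩ : Fin (2*m)) : ℕ)))
              (Function.update x ((σ j1 : ℕ)) ⁅(a:L), x ((σ j1 : ℕ))⁆
                ((σ (⟨2*(s':ℕ)+1, by have := s'.isLt; omega⟩ : Fin (2*m)) : ℕ)))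
            = Function.update v s
                (curvature pr (x ((σ j0 : ℕ))) ⁅(a:L), x ((σ j1 : ℕ))⁆) s'
          by_cases hss : s' = s
          · subst hss
            have r0 : (⟨2*(s':ℕ), by have := s'.isLt; omega⟩ : Fin (2*m)) = j0 := rfl
            have r1 : (⟨2*(s':ℕ)+1, by have := s'.isLt; omega⟩ : Fin (2*m)) = j1 := rfl
            rw [r0, r1, Function.update_of_ne (hval _ _ hj01)]
            simp only [Function.update_self]
          · have hne : ((s':ℕ)) ≠ ((s:ℕ)) := fun h3 => hss (Fin.ext h3)
            have d0 : (⟨2*(s':ℕ), by have := s'.isLt; omega⟩ : Fin (2*m)) ≠ j1 := by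
              intro h; have h2 := congrArg Fin.val h; simp [hj1] at h2; omega
            have d1 : (⟨2*(s':ℕ)+1, by have := s'.isLt; omega⟩ : Fin (2*m)) ≠ j1 := by
              intro h; have h2 := congrArg Fin.val h; simp [hj1] at h2; omega
            rw [Function.update_of_ne hss, Function.update_of_ne (hval _ _ d0),
              Function.update_of_ne (hval _ _ d1)]
        show g ((σ j0 : ℕ)) + g ((σ j1 : ℕ)) = _
        have hg0 : g ((σ j0 : ℕ)) = P (Function.update v s
            (curvature pr ⁅(a:L), x ((σ j0 : ℕ))⁆ (x ((σ j1 : ℕ))))) := by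
          rw [hg]; exact congrArg P hE0
        have hg1 : g ((σ j1 : ℕ)) = P (Function.update v s
            (curvature pr (x ((σ j0 : ℕ))) ⁅(a:L), x ((σ j1 : ℕ))⁆)) := by
          rw [hg]; exact congrArg P hE1
        rw [hg0, hg1, ← P.map_update_add]
        congr 1
        rw [curv_brk pr heq a]
      calc ∑ s : Fin m, ((fun j => g ((σ j : ℕ))) ⟨2*(s:ℕ), by have := s.isLt; omega⟩
            + (fun j => g ((σ j : ℕ))) ⟨2*(s:ℕ)+1, by have := s.isLt; omega⟩)
          = ∑ s : Fin m, P (Function.update v s ⁅a, v s⁆) :=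
            Finset.sum_congr rfl fun s _ => e2 s
        _ = 0 := hPinv a v
    simp only [key, smul_zero]
end

section
/- With the Moyal product ⋆ on A = MvPolynomial (Fin (2n)) (Polynomial ℂ) defined by the standard symplectic matrix ω̂, the pair (A, ⋆) is an associative unital algebra over ℂ[ℏ]: for all f, g, h ∈ A one has (f ⋆ g) ⋆ h = f ⋆ (g ⋆ h), and 1 ⋆ f = f ⋆ 1 = f; moreover ⋆ is ℂ[ℏ]-bilinear. (This is the polynomial Weyl algebra W^{pol}_{2n}.) -/
noncomputable section

/-- The polynomial Weyl algebra carrier: polynomials in `y₀, …, y_{2n−1}` with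
coefficients in `ℂ[ℏ]` (where `ℏ = Polynomial.X`). -/
abbrev WeylPoly (n : ℕ) := MvPolynomial (Fin (2*n)) (Polynomial ℂ)

/-- The standard symplectic matrix `ω̂`: `ω̂(i,j) = 1` if `j = i + n`, `−1` if
`i = j + n`, and `0` otherwise. -/
def omegaHat (n : ℕ) (i j : Fin (2*n)) : ℂ :=
  if (j : ℕ) = (i : ℕ) + n then 1 else if (i : ℕ) = (j : ℕ) + n then -1 else 0

/-- Iterated partial derivative `∂_{v 0} ⋯ ∂_{v (m−1)}`. -/
def multiDeriv {n m : ℕ} (v : Fin m → Fin (2*n)) (f : WeylPoly n) : WeylPoly n :=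
  (List.ofFn v).foldr (fun i g => MvPolynomial.pderiv i g) f

/-- The Moyal product
`f ⋆ g = ∑_{m} (ℏ^m / (2^m m!)) ∑_{i₁,…,i_m} ∑_{j₁,…,j_m} (∏_s ω̂(i_s, j_s)) ·
(∂_{i₁} ⋯ ∂_{i_m} f) · (∂_{j₁} ⋯ ∂_{j_m} g)`; the sum over `m` is truncated at
`totalDegree f`, beyond which all terms vanish. -/
def moyal (n : ℕ) (f g : WeylPoly n) : WeylPoly n :=
  ∑ m ∈ Finset.range (f.totalDegree + 1),
    MvPolynomial.C (Polynomial.C (1 / ((2:ℂ)^m * (Nat.factorial m : ℂ))) * Polynomial.X ^ m) *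
      ∑ v : Fin m → Fin (2*n), ∑ w : Fin m → Fin (2*n),
        MvPolynomial.C (Polynomial.C (∏ s : Fin m, omegaHat n (v s) (w s))) *
          (multiDeriv v f * multiDeriv w g)

/-!
Write `μ` for multiplication and `P = ∑ i j, ω i j • ∂ᵢ ⊗ ∂ⱼ` for an arbitrary matrix `ω`; the
Moyal product is `f ⋆ g = μ (exp P (f ⊗ g))` with `ω = (ℏ/2) ω̂`. Since `P` has constant
coefficients, every `∂ₖ` is a derivation of `⋆`; and `[P, Xᵢ ⊗ 1] = ∑ j, ω i j • 1 ⊗ ∂ⱼ` commutes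
with `P`, which gives `(Xᵢ f) ⋆ g = Xᵢ (f ⋆ g) + ∑ j, ω i j • f ⋆ ∂ⱼ g`. These two rules expand
both `((Xᵢ p) ⋆ g) ⋆ h` and `(Xᵢ p) ⋆ (g ⋆ h)` into the same terms, so associativity follows by
induction on the first factor.
-/

open Finset
open scoped Nat

namespace MvPolynomial

variable {σ R : Type*} [CommSemiring R]

theorem pderiv_pderiv_comm (i j : σ) (f : MvPolynomial σ R) :
    pderiv i (pderiv j f) = pderiv j (pderiv i f) := by
  induction f using MvPolynomial.induction_on with
  | C a => simp only [pderiv_C, map_zero]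
  | add p q hp hq => simp only [map_add, hp, hq]
  | mul_X p k ih =>
    rcases eq_or_ne k i with rfl | hi <;> rcases eq_or_ne k j with rfl | hj <;>
      simp [pderiv_X_of_ne, *] <;> ring

theorem pderiv_eq_zero_of_totalDegree_eq_zero {f : MvPolynomial σ R} (h : f.totalDegree = 0)
    (i : σ) : pderiv i f = 0 := by
  rw [totalDegree_eq_zero_iff_eq_C.1 h, pderiv_C]

theorem totalDegree_pderiv_lt {f : MvPolynomial σ R} (h : 0 < f.totalDegree) (i : σ) :
    (pderiv i f).totalDegree < f.totalDegree := by
  refine (Finset.sup_lt_iff h).2 fun m hm => ?_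
  have hcoeff : coeff (m + Finsupp.single i 1) f ≠ 0 := by
    rw [mem_support_iff, coeff_pderiv] at hm
    exact left_ne_zero_of_mul hm
  calc (m.sum fun _ e => e) < (m + Finsupp.single i 1).sum fun _ e => e := by
        rw [Finsupp.sum_add_index' (fun _ => rfl) (fun _ _ _ => rfl), Finsupp.sum_single_index rfl]
        omega
    _ ≤ f.totalDegree := le_totalDegree (mem_support_iff.2 hcoeff)

theorem totalDegree_pderiv_le (i : σ) (f : MvPolynomial σ R) :
    (pderiv i f).totalDegree ≤ f.totalDegree := by
  rcases Nat.eq_zero_or_pos f.totalDegree with h | h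
  · simp [pderiv_eq_zero_of_totalDegree_eq_zero h]
  · exact (totalDegree_pderiv_lt h i).le

def iteratedPDeriv {m : ℕ} (v : Fin m → σ) (f : MvPolynomial σ R) : MvPolynomial σ R :=
  (List.ofFn v).foldr (fun i g => pderiv i g) f

@[simp] theorem iteratedPDeriv_fin_zero (v : Fin 0 → σ) (f : MvPolynomial σ R) :
    iteratedPDeriv v f = f := rfl

@[simp] theorem iteratedPDeriv_cons {m : ℕ} (i : σ) (v : Fin m → σ) (f : MvPolynomial σ R) :
    iteratedPDeriv (Fin.cons i v) f = pderiv i (iteratedPDeriv v f) := by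
  simp [iteratedPDeriv, List.ofFn_succ]

theorem iteratedPDeriv_pderiv {m : ℕ} (v : Fin m → σ) (i : σ) (f : MvPolynomial σ R) :
    iteratedPDeriv v (pderiv i f) = pderiv i (iteratedPDeriv v f) := by
  induction m with
  | zero => rfl
  | succ m ih =>
    rw [← Fin.cons_self_tail v, iteratedPDeriv_cons, iteratedPDeriv_cons, ih, pderiv_pderiv_comm]

variable [Fintype σ] (ω : σ → σ → R)

/-- `bidiffPow ω m f g = μ (Pᵐ (f ⊗ g))`. -/
def bidiffPow : ℕ → MvPolynomial σ R →ₗ[R] MvPolynomial σ R →ₗ[R] MvPolynomial σ R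
  | 0 => LinearMap.mul R (MvPolynomial σ R)
  | m + 1 => ∑ i, ∑ j, ω i j • (bidiffPow m).compl₁₂ (pderiv i).toLinearMap (pderiv j).toLinearMap

@[simp] theorem bidiffPow_zero_apply (f g : MvPolynomial σ R) : bidiffPow ω 0 f g = f * g := rfl

@[simp] theorem bidiffPow_succ_apply (m : ℕ) (f g : MvPolynomial σ R) :
    bidiffPow ω (m + 1) f g = ∑ i, ∑ j, ω i j • bidiffPow ω m (pderiv i f) (pderiv j g) := by
  simp [bidiffPow, LinearMap.sum_apply]

theorem bidiffPow_eq_sum (m : ℕ) (f g : MvPolynomial σ R) :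
    bidiffPow ω m f g = ∑ v : Fin m → σ, ∑ w : Fin m → σ,
      (∏ s, ω (v s) (w s)) • (iteratedPDeriv v f * iteratedPDeriv w g) := by
  induction m generalizing f g with
  | zero => simp
  | succ m ih =>
    have sum_cons (F : (Fin (m + 1) → σ) → MvPolynomial σ R) :
        ∑ v, F v = ∑ i, ∑ v, F (Fin.cons i v) := by
      rw [← (Fin.consEquiv fun _ => σ).sum_comp, Fintype.sum_prod_type]
      rfl
    simp_rw [sum_cons, Fin.prod_univ_succ, Fin.cons_zero, Fin.cons_succ, iteratedPDeriv_cons,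
      ← iteratedPDeriv_pderiv, bidiffPow_succ_apply, ih, mul_smul, Finset.smul_sum]
    exact sum_congr rfl fun i _ => sum_comm

theorem bidiffPow_eq_zero_of_totalDegree_lt {m : ℕ} {f : MvPolynomial σ R}
    (h : f.totalDegree < m) (g : MvPolynomial σ R) : bidiffPow ω m f g = 0 := by
  induction m generalizing f g with
  | zero => omega
  | succ m ih =>
    rw [bidiffPow_succ_apply]
    refine sum_eq_zero fun i _ => sum_eq_zero fun j _ => ?_
    rcases Nat.eq_zero_or_pos f.totalDegree with h0 | h0
    · simp [pderiv_eq_zero_of_totalDegree_eq_zero h0]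
    · rw [ih (by have := totalDegree_pderiv_lt h0 i; omega), smul_zero]

theorem pderiv_bidiffPow (k : σ) (m : ℕ) (f g : MvPolynomial σ R) :
    pderiv k (bidiffPow ω m f g) = bidiffPow ω m (pderiv k f) g + bidiffPow ω m f (pderiv k g) := by
  induction m generalizing f g with
  | zero => simp only [bidiffPow_zero_apply, pderiv_mul]
  | succ m ih =>
    simp only [bidiffPow_succ_apply, map_sum, Derivation.map_smul, ih, smul_add, sum_add_distrib,
      pderiv_pderiv_comm k]

theorem bidiffPow_succ_X_mul_eq_sum (i : σ) (m : ℕ) (f g : MvPolynomial σ R) :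
    bidiffPow ω (m + 1) (X i * f) g =
      ∑ k, ∑ j, ω k j • bidiffPow ω m (X i * pderiv k f) (pderiv j g) +
        ∑ j, ω i j • bidiffPow ω m f (pderiv j g) := by
  have only_i : ∑ k, ∑ j, ω k j • bidiffPow ω m (pderiv k (X i) * f) (pderiv j g) =
      ∑ j, ω i j • bidiffPow ω m f (pderiv j g) := by
    rw [sum_eq_single i (fun k _ hk => by simp [pderiv_X_of_ne hk.symm]) (by simp),
      pderiv_X_self, one_mul]
  simp only [bidiffPow_succ_apply, pderiv_mul, map_add, LinearMap.add_apply, smul_add,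
    sum_add_distrib, only_i]
  rw [add_comm]

theorem bidiffPow_succ_X_mul (i : σ) (m : ℕ) (f g : MvPolynomial σ R) :
    bidiffPow ω (m + 1) (X i * f) g =
      X i * bidiffPow ω (m + 1) f g + (m + 1) • ∑ j, ω i j • bidiffPow ω m f (pderiv j g) := by
  induction m generalizing f g with
  | zero =>
    rw [bidiffPow_succ_X_mul_eq_sum, bidiffPow_succ_apply]
    simp only [bidiffPow_zero_apply, zero_add, one_smul, mul_sum, mul_smul_comm, mul_assoc]
  | succ m ih =>
    have hX : ∑ k, ∑ j, ω k j • (X i * bidiffPow ω (m + 1) (pderiv k f) (pderiv j g)) =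
        X i * bidiffPow ω (m + 2) f g := by
      simp only [bidiffPow_succ_apply _ (m + 1), mul_sum, mul_smul_comm]
    have hω : ∑ k, ∑ j, ω k j •
          ((m + 1) • ∑ l, ω i l • bidiffPow ω m (pderiv k f) (pderiv l (pderiv j g))) =
        (m + 1) • ∑ l, ω i l • bidiffPow ω (m + 1) f (pderiv l g) := by
      simp only [bidiffPow_succ_apply, smul_sum]
      refine (sum_congr rfl fun k _ => sum_comm).trans (sum_comm.trans
        (sum_congr rfl fun l _ => sum_congr rfl fun k _ => sum_congr rfl fun j _ => ?_))
      rw [pderiv_pderiv_comm l j, smul_comm (ω k j) (m + 1), smul_comm (ω k j) (ω i l)]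
    rw [bidiffPow_succ_X_mul_eq_sum]
    simp only [ih, smul_add, sum_add_distrib, hX, hω]
    rw [add_assoc, ← succ_nsmul]

section StarProduct

variable [Algebra ℚ R]

def starProd (f g : MvPolynomial σ R) : MvPolynomial σ R :=
  ∑ m ∈ range (f.totalDegree + 1), (m ! : ℚ)⁻¹ • bidiffPow ω m f g

theorem starProd_eq_sum_range {N : ℕ} {f : MvPolynomial σ R} (hN : f.totalDegree ≤ N)
    (g : MvPolynomial σ R) :
    starProd ω f g = ∑ m ∈ range (N + 1), (m ! : ℚ)⁻¹ • bidiffPow ω m f g := by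
  refine sum_subset (range_subset_range.2 (by omega)) fun m _ hm => ?_
  rw [bidiffPow_eq_zero_of_totalDegree_lt ω (by simp at hm; omega), smul_zero]

theorem starProd_add_left (f f' g : MvPolynomial σ R) :
    starProd ω (f + f') g = starProd ω f g + starProd ω f' g := by
  rw [starProd_eq_sum_range ω (le_max_left f.totalDegree f'.totalDegree),
    starProd_eq_sum_range ω (le_max_right f.totalDegree f'.totalDegree),
    starProd_eq_sum_range ω (totalDegree_add f f'), ← sum_add_distrib]
  simp only [map_add, LinearMap.add_apply, smul_add]

theorem starProd_add_right (f g g' : MvPolynomial σ R) :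
    starProd ω f (g + g') = starProd ω f g + starProd ω f g' := by
  simp only [starProd, map_add, smul_add, sum_add_distrib]

theorem starProd_smul_left (c : R) (f g : MvPolynomial σ R) :
    starProd ω (c • f) g = c • starProd ω f g := by
  rw [starProd_eq_sum_range ω (totalDegree_smul_le c f), starProd, smul_sum]
  simp only [map_smul, LinearMap.smul_apply, smul_comm c]

theorem starProd_smul_right (c : R) (f g : MvPolynomial σ R) :
    starProd ω f (c • g) = c • starProd ω f g := by
  simp only [starProd, map_smul, smul_sum, smul_comm c]

theorem starProd_sum_left {ι : Type*} (s : Finset ι) (F : ι → MvPolynomial σ R)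
    (g : MvPolynomial σ R) : starProd ω (∑ x ∈ s, F x) g = ∑ x ∈ s, starProd ω (F x) g :=
  let starProdRight : MvPolynomial σ R →+ MvPolynomial σ R :=
    { toFun := (starProd ω · g)
      map_zero' := by simp [starProd]
      map_add' := fun f f' => starProd_add_left ω f f' g }
  map_sum starProdRight F s

theorem C_starProd (a : R) (g : MvPolynomial σ R) : starProd ω (C a) g = C a * g := by
  simp [starProd]

theorem one_starProd (g : MvPolynomial σ R) : starProd ω 1 g = g := by
  simpa using C_starProd ω 1 g

theorem starProd_one (f : MvPolynomial σ R) : starProd ω f 1 = f := by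
  rw [starProd, sum_eq_single 0 (fun m _ hm => ?_) (by simp)]
  · simp
  · obtain ⟨k, rfl⟩ := Nat.exists_eq_succ_of_ne_zero hm
    simp

theorem pderiv_starProd (k : σ) (f g : MvPolynomial σ R) :
    pderiv k (starProd ω f g) = starProd ω (pderiv k f) g + starProd ω f (pderiv k g) := by
  rw [starProd, starProd_eq_sum_range ω (totalDegree_pderiv_le k f), starProd, ← sum_add_distrib,
    map_sum]
  simp only [Derivation.map_smul_of_tower, pderiv_bidiffPow, smul_add]

theorem X_mul_starProd (i : σ) (f g : MvPolynomial σ R) :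
    starProd ω (X i * f) g = X i * starProd ω f g + ∑ j, ω i j • starProd ω f (pderiv j g) := by
  have hdeg : (X i * f).totalDegree ≤ f.totalDegree + 1 := by
    refine (totalDegree_mul _ _).trans ?_
    have : (X i : MvPolynomial σ R).totalDegree ≤ 1 := (totalDegree_monomial_le _ _).trans (by simp)
    omega
  have hfact (m : ℕ) (x : MvPolynomial σ R) :
      (((m + 1)! : ℕ) : ℚ)⁻¹ • (m + 1) • x = (m ! : ℚ)⁻¹ • x := by
    rw [← Nat.cast_smul_eq_nsmul ℚ, smul_smul, Nat.factorial_succ]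
    congr 1
    push_cast
    field_simp
  have hsum_comm : ∑ j, ω i j • starProd ω f (pderiv j g) = ∑ m ∈ range (f.totalDegree + 1),
      (m ! : ℚ)⁻¹ • ∑ j, ω i j • bidiffPow ω m f (pderiv j g) := by
    simp only [starProd, smul_sum]
    exact sum_comm.trans (sum_congr rfl fun m _ => sum_congr rfl fun j _ => smul_comm _ _ _)
  have hX : X i * starProd ω f g = ∑ m ∈ range (f.totalDegree + 1),
      (((m + 1)! : ℕ) : ℚ)⁻¹ • (X i * bidiffPow ω (m + 1) f g) + X i * (f * g) := by
    rw [starProd_eq_sum_range ω f.totalDegree.le_succ, sum_range_succ', mul_add, mul_sum]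
    simp
  rw [hsum_comm, hX, starProd_eq_sum_range ω hdeg, sum_range_succ']
  simp only [bidiffPow_succ_X_mul, smul_add, hfact, sum_add_distrib, bidiffPow_zero_apply,
    Nat.factorial_zero, Nat.cast_one, inv_one, one_smul, mul_assoc]
  abel

theorem starProd_assoc (f g h : MvPolynomial σ R) :
    starProd ω (starProd ω f g) h = starProd ω f (starProd ω g h) := by
  induction f using MvPolynomial.induction_on generalizing g h with
  | C a => rw [C_starProd, C_starProd, ← smul_eq_C_mul, starProd_smul_left, smul_eq_C_mul]
  | add p q hp hq => rw [starProd_add_left, starProd_add_left, starProd_add_left, hp, hq]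
  | mul_X p i hp =>
    rw [mul_comm p (X i)]
    simp only [X_mul_starProd, starProd_add_left, starProd_sum_left, starProd_smul_left,
      pderiv_starProd, starProd_add_right, smul_add, sum_add_distrib, hp]
    abel

end StarProduct

end MvPolynomial

open MvPolynomial

theorem moyal_eq_starProd (n : ℕ) :
    moyal n = starProd fun i j => Polynomial.C (omegaHat n i j / 2) * Polynomial.X := by
  funext f g
  refine sum_congr rfl fun m _ => ?_
  rw [bidiffPow_eq_sum, mul_sum, smul_sum]
  refine sum_congr rfl fun v _ => ?_
  rw [mul_sum, smul_sum]
  refine sum_congr rfl fun w _ => ?_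
  rw [smul_eq_C_mul, Algebra.smul_def, MvPolynomial.algebraMap_apply]
  simp only [← mul_assoc, ← map_mul]
  congr 3
  simp only [div_eq_mul_inv, mul_inv_rev, one_mul, map_mul, map_prod, Polynomial.algebraMap_apply,
    map_inv₀, map_natCast, prod_mul_distrib, prod_const, card_univ, Fintype.card_fin]
  rw [← inv_pow, map_pow]
  ring

theorem moyal_assoc_unital_bilinear_general (n : ℕ) :
    (∀ f g h : WeylPoly n, moyal n (moyal n f g) h = moyal n f (moyal n g h))
    ∧ (∀ f : WeylPoly n, moyal n 1 f = f ∧ moyal n f 1 = f)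
    ∧ (∀ (c : Polynomial ℂ) (f g : WeylPoly n),
        moyal n (c • f) g = c • moyal n f g ∧ moyal n f (c • g) = c • moyal n f g)
    ∧ (∀ f f' g : WeylPoly n,
        moyal n (f + f') g = moyal n f g + moyal n f' g
        ∧ moyal n g (f + f') = moyal n g f + moyal n g f') := by
  rw [moyal_eq_starProd]
  exact ⟨starProd_assoc _, fun f => ⟨one_starProd _ f, starProd_one _ f⟩,
    fun c f g => ⟨starProd_smul_left _ c f g, starProd_smul_right _ c f g⟩,
    fun f f' g => ⟨starProd_add_left _ f f' g, starProd_add_right _ g f f'⟩⟩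

/-- The Moyal product makes
`A = MvPolynomial (Fin (2n)) (Polynomial ℂ)` into an associative unital algebra over
`ℂ[ℏ]`: it is associative, has `1` as a two-sided unit, and is `ℂ[ℏ]`-bilinear.
(This is the polynomial Weyl algebra `W^{pol}_{2n}`.) -/
theorem moyal_assoc_unital_bilinear (n : ℕ) (hn : 1 ≤ n) :
    (∀ f g h : WeylPoly n, moyal n (moyal n f g) h = moyal n f (moyal n g h))
    ∧ (∀ f : WeylPoly n, moyal n 1 f = f ∧ moyal n f 1 = f)
    ∧ (∀ (c : Polynomial ℂ) (f g : WeylPoly n),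
        moyal n (c • f) g = c • moyal n f g ∧ moyal n f (c • g) = c • moyal n f g)
    ∧ (∀ f f' g : WeylPoly n,
        moyal n (f + f') g = moyal n f g + moyal n f' g
        ∧ moyal n g (f + f') = moyal n g f + moyal n g f') :=
  moyal_assoc_unital_bilinear_general n

end
end

section
/- An element f ∈ A = MvPolynomial (Fin (2n)) (Polynomial ℂ) is central for the Moyal product if and only if it is constant in the y-variables: (∀ g ∈ A, f ⋆ g = g ⋆ f) ↔ (∀ i ∈ Fin(2n), ∂_i f = 0), i.e. if and only if f lies in the image of ℂ[ℏ] in A. (This is the statement that the center of the Weyl algebra with the (1/ℏ)-rescaled commutator bracket is ℂ[ℏ].) -/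
/-!
If `f` has no `y`-dependence, every Moyal term with `m ≥ 1` vanishes, so
`f ⋆ g = f g = g ⋆ f`.
Conversely, against a coordinate `y_j` the Moyal expansion stops after the first order term,
`f ⋆ y_j = f y_j + (ℏ/2) {f, y_j}`, and antisymmetry of the Poisson bracket gives
`f ⋆ y_j - y_j ⋆ f = ℏ {f, y_j} = ℏ ∑_a ω̂(a, j) ∂_a f`. Each column of `ω̂` has a single
nonzero entry, at the symplectic partner of `j`, so centrality forces every `∂_i f` to vanish.
-/

noncomputable section

open MvPolynomial

variable {n : ℕ}

theorem omegaHat_antisymm (i j : Fin (2*n)) : omegaHat n j i = -omegaHat n i j := by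
  have := i.isLt
  unfold omegaHat
  split_ifs <;> first | omega | norm_num

theorem exists_omegaHat_eq_ite (i : Fin (2*n)) :
    ∃ j, ∃ c ≠ (0 : ℂ), ∀ a, omegaHat n a j = if a = i then c else 0 := by
  by_cases hi : (i : ℕ) < n
  · refine ⟨⟨i + n, by omega⟩, 1, one_ne_zero, fun a => ?_⟩
    have := a.isLt
    unfold omegaHat
    simp only [Fin.ext_iff]
    split_ifs <;> first | rfl | omega
  · refine ⟨⟨i - n, by omega⟩, -1, by norm_num, fun a => ?_⟩
    have := a.isLt
    unfold omegaHat
    simp only [Fin.ext_iff]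
    split_ifs <;> first | rfl | omega

theorem multiDeriv_zero (v : Fin 0 → Fin (2*n)) (f : WeylPoly n) : multiDeriv v f = f := rfl

theorem multiDeriv_succ {m : ℕ} (v : Fin (m+1) → Fin (2*n)) (f : WeylPoly n) :
    multiDeriv v f = pderiv (v 0) (multiDeriv (Fin.tail v) f) := by
  simp only [multiDeriv, List.ofFn_succ, List.foldr_cons]; rfl

theorem multiDeriv_one (i : Fin (2*n)) (f : WeylPoly n) :
    multiDeriv (fun _ : Fin 1 => i) f = pderiv i f := rfl

theorem multiDeriv_eq_zero_of_pderiv_eq_zero {f : WeylPoly n} (hf : ∀ i, pderiv i f = 0)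
    {m : ℕ} (v : Fin (m+1) → Fin (2*n)) : multiDeriv v f = 0 := by
  induction m with
  | zero => exact hf (v 0)
  | succ k ih => rw [multiDeriv_succ, ih, map_zero]

theorem multiDeriv_eq_multiDeriv_init {m : ℕ} (v : Fin (m+1) → Fin (2*n)) (f : WeylPoly n) :
    multiDeriv v f = multiDeriv (Fin.init v) (pderiv (v (Fin.last m)) f) := by
  simp only [multiDeriv, List.ofFn_succ', List.concat_eq_append, List.foldr_append, List.foldr_cons,
    List.foldr_nil]
  rfl

theorem multiDeriv_X_eq_zero {m : ℕ} (v : Fin (m+2) → Fin (2*n)) (j : Fin (2*n)) :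
    multiDeriv v (X j : WeylPoly n) = 0 := by
  rw [multiDeriv_eq_multiDeriv_init]
  refine multiDeriv_eq_zero_of_pderiv_eq_zero (fun i => ?_) _
  rw [pderiv_X, Pi.single_apply]
  split_ifs <;> simp

theorem sum_fun_fin_one {β M : Type*} [Fintype β] [AddCommMonoid M] (F : (Fin 1 → β) → M) :
    ∑ v, F v = ∑ b, F (fun _ => b) :=
  ((Equiv.funUnique (Fin 1) β).symm.sum_comp F).symm

/-- `moyal n f g` unfolds to `∑ m ∈ Finset.range (f.totalDegree + 1), moyalTerm n m f g`. -/
def moyalTerm (n m : ℕ) (f g : WeylPoly n) : WeylPoly n :=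
  C (Polynomial.C (1 / ((2:ℂ)^m * (Nat.factorial m : ℂ))) * Polynomial.X ^ m) *
    ∑ v : Fin m → Fin (2*n), ∑ w : Fin m → Fin (2*n),
      C (Polynomial.C (∏ s : Fin m, omegaHat n (v s) (w s))) * (multiDeriv v f * multiDeriv w g)

def poissonBracket (n : ℕ) (f g : WeylPoly n) : WeylPoly n :=
  ∑ a, ∑ b, C (Polynomial.C (omegaHat n a b)) * (pderiv a f * pderiv b g)

theorem poissonBracket_skew (f g : WeylPoly n) : poissonBracket n g f = -poissonBracket n f g := by
  rw [poissonBracket, poissonBracket, Finset.sum_comm, ← Finset.sum_neg_distrib]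
  refine Finset.sum_congr rfl fun a _ => ?_
  rw [← Finset.sum_neg_distrib]
  refine Finset.sum_congr rfl fun b _ => ?_
  rw [omegaHat_antisymm, Polynomial.C_neg, C_neg]
  ring

theorem poissonBracket_X_right (f : WeylPoly n) (j : Fin (2*n)) :
    poissonBracket n f (X j) = ∑ a, C (Polynomial.C (omegaHat n a j)) * pderiv a f := by
  simp [poissonBracket, pderiv_X, Pi.single_apply]

theorem moyalTerm_zero (f g : WeylPoly n) : moyalTerm n 0 f g = f * g := by
  simp [moyalTerm, multiDeriv_zero]

theorem moyalTerm_one (f g : WeylPoly n) :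
    moyalTerm n 1 f g = C (Polynomial.C (1 / 2) * Polynomial.X) * poissonBracket n f g := by
  simp [moyalTerm, poissonBracket, sum_fun_fin_one, multiDeriv_one]

theorem moyalTerm_eq_zero {m : ℕ} {f g : WeylPoly n}
    (h : ∀ v w : Fin m → Fin (2*n), multiDeriv v f * multiDeriv w g = 0) :
    moyalTerm n m f g = 0 := by
  simp [moyalTerm, h]

theorem moyal_eq_sum_range_moyalTerm {f g : WeylPoly n} {N : ℕ} (hN : N ≤ f.totalDegree + 1)
    (h : ∀ m ≥ N, ∀ v w : Fin m → Fin (2*n), multiDeriv v f * multiDeriv w g = 0) :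
    moyal n f g = ∑ m ∈ Finset.range N, moyalTerm n m f g :=
  (Finset.sum_subset (Finset.range_subset_range.2 hN) fun m _ hm =>
    moyalTerm_eq_zero (h m (by simpa using hm))).symm

theorem moyal_eq_mul {f g : WeylPoly n}
    (h : ∀ m (v w : Fin (m+1) → Fin (2*n)), multiDeriv v f * multiDeriv w g = 0) :
    moyal n f g = f * g := by
  rw [moyal_eq_sum_range_moyalTerm (N := 1) (by omega) fun m hm => ?_, Finset.sum_range_one,
    moyalTerm_zero]
  obtain ⟨k, rfl⟩ := Nat.exists_eq_add_of_le' hm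
  exact h k

theorem moyal_eq_mul_add_poissonBracket {f g : WeylPoly n} (hf : f.totalDegree ≠ 0)
    (h : ∀ m (v w : Fin (m+2) → Fin (2*n)), multiDeriv v f * multiDeriv w g = 0) :
    moyal n f g = f * g + C (Polynomial.C (1 / 2) * Polynomial.X) * poissonBracket n f g := by
  rw [moyal_eq_sum_range_moyalTerm (N := 2) (by omega) fun m hm => ?_, Finset.sum_range_succ,
    Finset.sum_range_one, moyalTerm_zero, moyalTerm_one]
  obtain ⟨k, rfl⟩ := Nat.exists_eq_add_of_le' hm
  exact h k

theorem poissonBracket_X_eq_zero_of_moyal_comm {f : WeylPoly n} (hf : f.totalDegree ≠ 0)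
    {j : Fin (2*n)} (h : moyal n f (X j) = moyal n (X j) f) : poissonBracket n f (X j) = 0 := by
  rw [moyal_eq_mul_add_poissonBracket hf (fun m v w => by rw [multiDeriv_X_eq_zero, mul_zero]),
    moyal_eq_mul_add_poissonBracket (by rw [totalDegree_X]; exact one_ne_zero)
      (fun m v w => by rw [multiDeriv_X_eq_zero, zero_mul]),
    poissonBracket_skew f, mul_comm (X j), add_right_inj] at h
  have hc : C (Polynomial.C (1 / 2 : ℂ) * Polynomial.X) ≠ (0 : WeylPoly n) := by
    simp [Polynomial.X_ne_zero]
  have h2 : (2 * C (Polynomial.C (1 / 2 : ℂ) * Polynomial.X)) * poissonBracket n f (X j) = 0 := by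
    linear_combination h
  exact (mul_eq_zero.1 h2).resolve_left (mul_ne_zero two_ne_zero hc)

theorem pderiv_eq_zero_of_poissonBracket_X_eq_zero {f : WeylPoly n}
    (h : ∀ j, poissonBracket n f (X j) = 0) (i : Fin (2*n)) : pderiv i f = 0 := by
  obtain ⟨j, c, hc, hω⟩ := exists_omegaHat_eq_ite i
  have hj := h j
  simp only [poissonBracket_X_right, hω, apply_ite, map_zero, ite_mul, zero_mul,
    Finset.sum_ite_eq', Finset.mem_univ, if_true] at hj
  exact (mul_eq_zero.1 hj).resolve_left (by simpa using hc)

theorem moyal_central_iff_general (n : ℕ) (f : WeylPoly n) :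
    (∀ g : WeylPoly n, moyal n f g = moyal n g f)
      ↔ (∀ i : Fin (2*n), MvPolynomial.pderiv i f = 0) := by
  constructor
  · intro hf
    obtain hdeg | hdeg := eq_or_ne f.totalDegree 0
    · rw [totalDegree_eq_zero_iff_eq_C.1 hdeg]
      exact fun i => pderiv_C
    · exact pderiv_eq_zero_of_poissonBracket_X_eq_zero fun j =>
        poissonBracket_X_eq_zero_of_moyal_comm hdeg (hf _)
  · intro hf g
    rw [moyal_eq_mul fun m v w => by rw [multiDeriv_eq_zero_of_pderiv_eq_zero hf, zero_mul],
      moyal_eq_mul fun m v w => by rw [multiDeriv_eq_zero_of_pderiv_eq_zero hf w, mul_zero],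
      mul_comm]

/-- An element `f` of the polynomial Weyl algebra is central for the
Moyal product if and only if it is constant in the `y`-variables, i.e. all partial
derivatives `∂_i f` vanish (equivalently, `f` lies in the image of `ℂ[ℏ]`). This is
the statement that the center of the Weyl algebra with the `(1/ℏ)`-rescaled
commutator bracket is `ℂ[ℏ]`. -/
theorem moyal_central_iff (n : ℕ) (hn : 1 ≤ n) (f : WeylPoly n) :
    (∀ g : WeylPoly n, moyal n f g = moyal n g f)
      ↔ (∀ i : Fin (2*n), MvPolynomial.pderiv i f = 0) :=
  moyal_central_iff_general n f

end
end
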